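/- Let n ≥ 1 and let the environment parameter space be the box Θ = {θ ∈ ℝⁿ : aᵢ ≤ θᵢ ≤ bᵢ for all i}, where aᵢ ≤ bᵢ. Let p : ℝⁿ → ℝ be the performance function of a fixed policy. Assume that for every coordinate i there exist δᵢ > 0 and εᵢ ≥ 0 such that for all θ, θ′ ∈ Θ that agree in every coordinate except possibly coordinate i and satisfy |θ′ᵢ − θᵢ| ≤ δᵢ, one has |p(θ′) − p(θ)| ≤ εᵢ. Then there exists a finite set F ⊆ Θ such that for every θ ∈ Θ there is some θ* ∈ F with |p(θ) − p(θ*)| ≤ Σᵢ εᵢ. -/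
import Mathlib


/-- Theorem 1 (general n-dimensional form): if the performance function `p` of a fixed
policy is stable with respect to single-coordinate perturbations of size at most `δ i`
(changing by at most `ε i`) on the box `Θ = Set.Icc a b ⊆ ℝⁿ`, then there is a finite
representative set `F ⊆ Θ` whose performance values approximate `p` on all of `Θ`
up to `∑ i, ε i`. -/
theorem stmt_0 {n : ℕ} (hn : 1 ≤ n) (a b : Fin n → ℝ) (hab : ∀ i, a i ≤ b i)
    (p : (Fin n → ℝ) → ℝ) (δ ε : Fin n → ℝ)
    (hδ : ∀ i, 0 < δ i) (hε : ∀ i, 0 ≤ ε i)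
    (hstab : ∀ i : Fin n, ∀ θ ∈ Set.Icc a b, ∀ θ' ∈ Set.Icc a b,
      (∀ j, j ≠ i → θ' j = θ j) → |θ' i - θ i| ≤ δ i → |p θ' - p θ| ≤ ε i) :
    ∃ F : Finset (Fin n → ℝ), (F : Set (Fin n → ℝ)) ⊆ Set.Icc a b ∧
      ∀ θ ∈ Set.Icc a b, ∃ θstar ∈ F, |p θ - p θstar| ≤ ∑ i, ε i := by
  classical
  set snap : (Fin n → ℝ) → (Fin n → ℝ) :=
    fun θ i => a i + δ i * (⌊(θ i - a i) / δ i⌋₊ : ℝ) with hsnapdef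
  set S : Fin n → Finset ℝ :=
    fun i => (Finset.range (⌊(b i - a i) / δ i⌋₊ + 1)).image
      (fun k : ℕ => a i + δ i * (k : ℝ)) with hSdef
  refine ⟨(Fintype.piFinset S).filter (· ∈ Set.Icc a b), ?_, ?_⟩
  · intro x hx
    simp only [Finset.coe_filter, Set.mem_setOf_eq] at hx
    exact hx.2
  · intro θ hθ
    have hθ1 : ∀ i, a i ≤ θ i := fun i => hθ.1 i
    have hθ2 : ∀ i, θ i ≤ b i := fun i => hθ.2 i
    have hsnap_lb : ∀ i, a i ≤ snap θ i := by
      intro i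
      have : (0:ℝ) ≤ δ i * (⌊(θ i - a i) / δ i⌋₊ : ℝ) :=
        mul_nonneg (hδ i).le (Nat.cast_nonneg _)
      simp only [hsnapdef]; linarith
    have hsnap_ub : ∀ i, snap θ i ≤ θ i := by
      intro i
      have h1 : (⌊(θ i - a i) / δ i⌋₊ : ℝ) ≤ (θ i - a i) / δ i :=
        Nat.floor_le (div_nonneg (by linarith [hθ1 i]) (hδ i).le)
      rw [le_div_iff₀ (hδ i)] at h1
      simp only [hsnapdef]; nlinarith
    have hsnap_close : ∀ i, θ i - snap θ i ≤ δ i := by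
      intro i
      have h2 : (θ i - a i) / δ i < (⌊(θ i - a i) / δ i⌋₊ : ℝ) + 1 :=
        Nat.lt_floor_add_one _
      rw [div_lt_iff₀ (hδ i)] at h2
      simp only [hsnapdef]; nlinarith
    have hsnap_mem : snap θ ∈ Set.Icc a b :=
      ⟨fun i => hsnap_lb i, fun i => le_trans (hsnap_ub i) (hθ2 i)⟩
    -- chain of intermediate points
    set T : ℕ → (Fin n → ℝ) := fun m j => if (j : ℕ) < m then snap θ j else θ j with hTdef
    have hT0 : T 0 = θ := by funext j; simp [hTdef]
    have hTn : T n = snap θ := by funext j; simp [hTdef, j.isLt]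
    have hTmem : ∀ m, T m ∈ Set.Icc a b := by
      intro m
      constructor <;> intro j <;> simp only [hTdef] <;> split
      · exact hsnap_lb j
      · exact hθ1 j
      · exact le_trans (hsnap_ub j) (hθ2 j)
      · exact hθ2 j
    have key : ∀ m, |p (T m) - p θ| ≤
        ∑ i ∈ Finset.univ.filter (fun i : Fin n => (i : ℕ) < m), ε i := by
      intro m
      induction m with
      | zero => simp [hT0]
      | succ m ih =>
        by_cases hm : m < n
        · set i : Fin n := ⟨m, hm⟩ with hidef
          have hdiff : ∀ j, j ≠ i → T (m + 1) j = T m j := by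
            intro j hj
            have hjm : (j : ℕ) ≠ m := by
              intro h; apply hj; apply Fin.ext; simpa [hidef] using h
            simp only [hTdef]
            by_cases hlt : (j : ℕ) < m
            · rw [if_pos (by omega), if_pos hlt]
            · rw [if_neg (by omega), if_neg hlt]
          have hTi : T m i = θ i := by simp [hTdef, hidef]
          have hTi' : T (m + 1) i = snap θ i := by simp [hTdef, hidef]
          have hclose : |T (m + 1) i - T m i| ≤ δ i := by
            rw [hTi, hTi', abs_sub_comm, abs_of_nonneg (by linarith [hsnap_ub i])]
            exact hsnap_close i
          have hstep := hstab i (T m) (hTmem m) (T (m + 1)) (hTmem (m + 1)) hdiff hclose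
          have hfilt : Finset.univ.filter (fun j : Fin n => (j : ℕ) < m + 1) =
              insert i (Finset.univ.filter (fun j : Fin n => (j : ℕ) < m)) := by
            ext j
            simp only [Finset.mem_filter, Finset.mem_univ, true_and, Finset.mem_insert]
            constructor
            · intro h
              rcases Nat.lt_succ_iff_lt_or_eq.mp h with h | h
              · exact Or.inr h
              · exact Or.inl (Fin.ext (by simpa [hidef] using h))
            · rintro (rfl | h)
              · simp [hidef]
              · omega
          rw [hfilt, Finset.sum_insert (by simp [hidef])]
          calc |p (T (m + 1)) - p θ|
              ≤ |p (T (m + 1)) - p (T m)| + |p (T m) - p θ| := abs_sub_le _ _ _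
            _ ≤ ε i + ∑ j ∈ Finset.univ.filter (fun j : Fin n => (j : ℕ) < m), ε j := by
                exact add_le_add hstep ih
        · have hTeq : T (m + 1) = T m := by
            funext j
            have := j.isLt
            simp only [hTdef]
            rw [if_pos (by omega), if_pos (by omega)]
          have hfilt : Finset.univ.filter (fun j : Fin n => (j : ℕ) < m + 1) =
              Finset.univ.filter (fun j : Fin n => (j : ℕ) < m) := by
            ext j
            have := j.isLt
            simp only [Finset.mem_filter, Finset.mem_univ, true_and]
            omega
          rw [hTeq, hfilt]; exact ih
    have hfin : |p (snap θ) - p θ| ≤ ∑ i, ε i := by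
      have := key n
      rw [hTn] at this
      have hfilt : Finset.univ.filter (fun j : Fin n => (j : ℕ) < n) = Finset.univ := by
        ext j; simp [j.isLt]
      rwa [hfilt] at this
    refine ⟨snap θ, ?_, by rw [abs_sub_comm]; exact hfin⟩
    rw [Finset.mem_filter]
    refine ⟨?_, hsnap_mem⟩
    rw [Fintype.mem_piFinset]
    intro i
    simp only [hSdef, Finset.mem_image, Finset.mem_range]
    refine ⟨⌊(θ i - a i) / δ i⌋₊, ?_, rfl⟩
    have : ⌊(θ i - a i) / δ i⌋₊ ≤ ⌊(b i - a i) / δ i⌋₊ :=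
      Nat.floor_le_floor (by gcongr <;> linarith [hθ2 i, hδ i])
    omega
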